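/- For every d ≥ 1 and all d×d complex (or real) matrices Σ, M, N, the function t ↦ dexp_{Σ+tN}(M) is differentiable at t = 0 and its derivative equals ∫_0^1 τ [dexp_{τΣ}(N), e^{τΣ} M e^{−τΣ}] dτ, where [A,B] := AB − BA and dexp_Σ(M) = ∑_{n≥0} ad_Σ^n(M)/(n+1)!. -/

import Mathlib

noncomputable section

attribute [local instance] Matrix.normedAddCommGroup Matrix.normedSpace

/-- `d × d` complex matrices. -/
abbrev Mat (d : ℕ) := Matrix (Fin d) (Fin d) ℂ

/-- Iterated adjoint operator. -/
def adPow {d : ℕ} (S : Mat d) : ℕ → Mat d → Mat d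
  | 0, M => M
  | n + 1, M => S * adPow S n M - adPow S n M * S

/-- `dexp_Σ(M) = ∑_{n≥0} ad_Σ^n(M)/(n+1)!`. -/
def dexp {d : ℕ} (S M : Mat d) : Mat d :=
  ∑' n : ℕ, (((n + 1).factorial : ℂ))⁻¹ • adPow S n M

/-- The Lie commutator `[A, B] = AB − BA`. -/
def lieComm {d : ℕ} (A B : Mat d) : Mat d := A * B - B * A

/-!
Put `A = ad_Σ`. Both sides are power series whose coefficients are brackets
`[A^a N, A^b M]`. Differentiating `∑ (A + t ad_N)^n M / (n+1)!` termwise (in the Banach algebra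
of operators) gives `∑_n (n+1)!⁻¹ ∑_{i+k=n-1} A^k [N, A^i M]`. On the other side,
`e^{τΣ} M e^{-τΣ} = e^{τA} M`, so the integrand is `τ` times the Cauchy product
`∑_m τ^m ∑_{a+b=m} [A^a N, A^b M] / ((a+1)! b!)`, and integrating termwise divides the `m`-th
coefficient by `m + 2`. The Leibniz rule `A^k [N, Y] = ∑_p C(k,p) [A^p N, A^{k-p} Y]` and the
hockey-stick identity `∑_{i ≤ r} C(p+i, p) = C(p+r+1, p+1)` identify the two coefficients.
-/

open Finset LieAlgebra NormedSpace
open scoped Nat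

attribute [local instance 100] LieRing.ofAssociativeRing

theorem Finset.Nat.sum_antidiagonal_sum_antidiagonal_snd {M : Type*} [AddCommMonoid M]
    (f : ℕ → ℕ → ℕ → M) (m : ℕ) :
    ∑ ik ∈ antidiagonal m, ∑ pq ∈ antidiagonal ik.2, f ik.1 pq.1 pq.2 =
      ∑ pr ∈ antidiagonal m, ∑ iq ∈ antidiagonal pr.2, f iq.1 pr.1 iq.2 := by
  simp only [Finset.sum_sigma']
  apply Finset.sum_nbij' (fun ⟨⟨i, _⟩, ⟨p, q⟩⟩ ↦ ⟨(p, i + q), (i, q)⟩)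
    (fun ⟨⟨p, _⟩, ⟨i, q⟩⟩ ↦ ⟨(i, p + q), (p, q)⟩) <;>
    aesop (add simp [add_assoc, add_left_comm])

theorem inv_factorial_succ_le (n : ℕ) : ((n + 1)! : ℝ)⁻¹ ≤ (n ! : ℝ)⁻¹ :=
  inv_anti₀ (by positivity) (by exact_mod_cast Nat.factorial_le n.le_succ)

theorem natCast_mul_inv_factorial_succ_le (n : ℕ) :
    (n : ℝ) * ((n + 1)! : ℝ)⁻¹ ≤ (n ! : ℝ)⁻¹ := by
  rw [Nat.factorial_succ, Nat.cast_mul, mul_inv, ← mul_assoc]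
  refine mul_le_of_le_one_left (by positivity) ?_
  rw [← div_eq_mul_inv, div_le_one (by positivity)]
  push_cast
  linarith

theorem inv_factorial_mul_choose (p r : ℕ) :
    ((p + r + 2)! : ℝ)⁻¹ * ((p + r + 1).choose (p + 1) : ℝ) =
      ((p + r + 2 : ℕ) : ℝ)⁻¹ * (((p + 1)! : ℝ)⁻¹ * (r ! : ℝ)⁻¹) := by
  have h := Nat.add_choose_mul_factorial_mul_factorial (p + 1) r
  rw [show p + r + 2 = p + 1 + r + 1 by ring, Nat.factorial_succ, ← h,
    show p + r + 1 = p + 1 + r by ring, Nat.choose_symm_add]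
  have : ((p + 1 + r).choose r : ℝ) ≠ 0 := Nat.cast_ne_zero.mpr (Nat.choose_pos (by omega)).ne'
  push_cast
  field_simp

section LieAlgebra

variable {R L : Type*} [CommRing R] [LieRing L] [LieAlgebra R L]

theorem sum_antidiagonal_ad_pow_lie (S N M : L) (m : ℕ) :
    ∑ ik ∈ antidiagonal m, (ad R L S ^ ik.2) ⁅N, (ad R L S ^ ik.1) M⁆ =
      ∑ pr ∈ antidiagonal m,
        (m + 1).choose (pr.1 + 1) • ⁅(ad R L S ^ pr.1) N, (ad R L S ^ pr.2) M⁆ := by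
  calc ∑ ik ∈ antidiagonal m, (ad R L S ^ ik.2) ⁅N, (ad R L S ^ ik.1) M⁆
      = ∑ ik ∈ antidiagonal m, ∑ pq ∈ antidiagonal ik.2,
          (pq.1 + pq.2).choose pq.1 • ⁅(ad R L S ^ pq.1) N, (ad R L S ^ (ik.1 + pq.2)) M⁆ := by
        refine sum_congr rfl fun ik _ => ?_
        rw [ad_pow_lie]
        refine sum_congr rfl fun pq hpq => ?_
        rw [HasAntidiagonal.mem_antidiagonal] at hpq
        rw [hpq, add_comm ik.1, pow_add, Module.End.mul_apply]
    _ = ∑ pr ∈ antidiagonal m, ∑ iq ∈ antidiagonal pr.2,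
          (pr.1 + iq.2).choose pr.1 • ⁅(ad R L S ^ pr.1) N, (ad R L S ^ pr.2) M⁆ := by
        rw [Finset.Nat.sum_antidiagonal_sum_antidiagonal_snd
          (fun i p q => (p + q).choose p • ⁅(ad R L S ^ p) N, (ad R L S ^ (i + q)) M⁆)]
        refine sum_congr rfl fun pr _ => sum_congr rfl fun iq hiq => ?_
        rw [HasAntidiagonal.mem_antidiagonal.mp hiq]
    _ = _ := by
        refine sum_congr rfl fun pr hpr => ?_
        rw [← sum_smul, sum_antidiagonal_choose_add, ← HasAntidiagonal.mem_antidiagonal.mp hpr]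

end LieAlgebra

section RealLieAlgebra

variable {L : Type*} [LieRing L] [LieAlgebra ℝ L]

/-- The coefficient of `τ ^ m` in `⁅dexp_{τS} N, e^{τS} M e^{-τS}⁆`. -/
def dexpDerivCoeff (S N M : L) (m : ℕ) : L :=
  ∑ ab ∈ antidiagonal m,
    (((ab.1 + 1)! : ℝ)⁻¹ * (ab.2 ! : ℝ)⁻¹) • ⁅(ad ℝ L S ^ ab.1) N, (ad ℝ L S ^ ab.2) M⁆

theorem dexpDerivCoeff_smul (S N M : L) (τ : ℝ) (m : ℕ) :
    dexpDerivCoeff (τ • S) N M m = τ ^ m • dexpDerivCoeff S N M m := by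
  rw [dexpDerivCoeff, dexpDerivCoeff, smul_sum]
  refine sum_congr rfl fun ab hab => ?_
  simp only [map_smul, smul_pow, LinearMap.smul_apply, smul_lie, lie_smul, smul_smul]
  rw [← HasAntidiagonal.mem_antidiagonal.mp hab, pow_add]
  ring_nf

theorem inv_factorial_smul_sum_range_ad_pow_lie (S N M : L) (m : ℕ) :
    ((m + 2)! : ℝ)⁻¹ • ∑ i ∈ range (m + 1), (ad ℝ L S ^ (m - i)) ⁅N, (ad ℝ L S ^ i) M⁆ =
      ((m + 2 : ℕ) : ℝ)⁻¹ • dexpDerivCoeff S N M m := by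
  rw [← Finset.Nat.sum_antidiagonal_eq_sum_range_succ
      (fun i k => (ad ℝ L S ^ k) ⁅N, (ad ℝ L S ^ i) M⁆),
    sum_antidiagonal_ad_pow_lie, dexpDerivCoeff, smul_sum, smul_sum]
  refine sum_congr rfl fun pr hpr => ?_
  rw [← HasAntidiagonal.mem_antidiagonal.mp hpr, ← Nat.cast_smul_eq_nsmul ℝ, smul_smul, smul_smul,
    inv_factorial_mul_choose]

end RealLieAlgebra

section NormedRing

variable {𝔸 : Type*} [NormedRing 𝔸]

theorem norm_pow_mul_le (X Y : 𝔸) (n : ℕ) : ‖X ^ n * Y‖ ≤ ‖X‖ ^ n * ‖Y‖ := by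
  induction n with
  | zero => simp
  | succ n ih =>
    rw [pow_succ', mul_assoc, pow_succ', mul_assoc]
    exact (norm_mul_le _ _).trans (mul_le_mul_of_nonneg_left ih (norm_nonneg _))

theorem norm_mul_pow_le (X Y : 𝔸) (n : ℕ) : ‖Y * X ^ n‖ ≤ ‖Y‖ * ‖X‖ ^ n := by
  induction n with
  | zero => simp
  | succ n ih =>
    rw [pow_succ, ← mul_assoc, pow_succ, ← mul_assoc]
    exact (norm_mul_le _ _).trans (mul_le_mul_of_nonneg_right ih (norm_nonneg _))

theorem hasSum_sum_antidiagonal_lie [CompleteSpace 𝔸] {f g : ℕ → 𝔸}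
    (hf : Summable fun n => ‖f n‖) (hg : Summable fun n => ‖g n‖) :
    HasSum (fun m => ∑ ab ∈ antidiagonal m, ⁅f ab.1, g ab.2⁆) ⁅∑' a, f a, ∑' b, g b⁆ := by
  have hfg := (summable_norm_sum_mul_antidiagonal_of_summable_norm hf hg).of_norm.hasSum
  have hgf := (summable_norm_sum_mul_antidiagonal_of_summable_norm hg hf).of_norm.hasSum
  rw [← tsum_mul_tsum_eq_tsum_sum_antidiagonal_of_summable_norm hf hg] at hfg
  rw [← tsum_mul_tsum_eq_tsum_sum_antidiagonal_of_summable_norm hg hf] at hgf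
  have hsplit : (fun m => ∑ ab ∈ antidiagonal m, ⁅f ab.1, g ab.2⁆) = fun m =>
      ∑ ab ∈ antidiagonal m, f ab.1 * g ab.2 - ∑ ab ∈ antidiagonal m, g ab.1 * f ab.2 := by
    funext m
    rw [← Finset.Nat.sum_antidiagonal_swap (f := fun ab => g ab.1 * f ab.2), ← sum_sub_distrib]
    rfl
  rw [hsplit, Ring.lie_def]
  exact hfg.sub hgf

end NormedRing

section BanachAlgebra

variable {𝔸 : Type*} [NormedRing 𝔸] [NormedAlgebra ℝ 𝔸]

theorem summable_norm_inv_factorial_succ_smul_pow (X : 𝔸) :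
    Summable fun n => ‖((n + 1)! : ℝ)⁻¹ • X ^ n‖ := by
  refine (norm_expSeries_summable' (𝕂 := ℝ) X).of_nonneg_of_le (fun _ => norm_nonneg _)
    fun n => ?_
  rw [norm_smul, norm_smul, Real.norm_of_nonneg (by positivity),
    Real.norm_of_nonneg (by positivity)]
  exact mul_le_mul_of_nonneg_right (inv_factorial_succ_le n) (norm_nonneg _)

theorem norm_inv_factorial_succ_smul_sum_le {X B : 𝔸} {r : ℝ} (hX : ‖X‖ ≤ r) (hr : 1 ≤ r)
    (n : ℕ) :
    ‖((n + 1)! : ℝ)⁻¹ • ∑ i ∈ range n, X ^ (n.pred - i) * B * X ^ i‖ ≤ ‖B‖ * (r ^ n / n !) := by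
  have hterm : ∀ i ∈ range n, ‖X ^ (n.pred - i) * B * X ^ i‖ ≤ ‖B‖ * r ^ n := by
    intro i hi
    calc ‖X ^ (n.pred - i) * B * X ^ i‖ ≤ ‖X‖ ^ (n.pred - i) * ‖B‖ * ‖X‖ ^ i :=
          (norm_mul_pow_le _ _ _).trans <|
            mul_le_mul_of_nonneg_right (norm_pow_mul_le _ _ _) (by positivity)
      _ ≤ r ^ (n.pred - i) * ‖B‖ * r ^ i := by gcongr
      _ = ‖B‖ * r ^ (n.pred - i + i) := by ring
      _ ≤ ‖B‖ * r ^ n := by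
          gcongr
          have := mem_range.mp hi
          rw [Nat.pred_eq_sub_one]
          omega
  calc ‖((n + 1)! : ℝ)⁻¹ • ∑ i ∈ range n, X ^ (n.pred - i) * B * X ^ i‖
      ≤ ((n + 1)! : ℝ)⁻¹ * (n * (‖B‖ * r ^ n)) := by
        rw [norm_smul, Real.norm_of_nonneg (by positivity)]
        gcongr
        simpa using norm_sum_le_of_le (range n) hterm
    _ ≤ (n ! : ℝ)⁻¹ * (‖B‖ * r ^ n) := by
        rw [← mul_assoc, mul_comm _ (n : ℝ)]
        gcongr
        exact natCast_mul_inv_factorial_succ_le n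
    _ = ‖B‖ * (r ^ n / n !) := by ring

theorem hasDerivAt_tsum_inv_factorial_succ_smul_pow [CompleteSpace 𝔸] (A B : 𝔸) :
    HasDerivAt (fun t : ℝ => ∑' n, ((n + 1)! : ℝ)⁻¹ • (A + t • B) ^ n)
      (∑' n, ((n + 1)! : ℝ)⁻¹ • ∑ i ∈ range n, A ^ (n.pred - i) * B * A ^ i) 0 := by
  set r := ‖A‖ + ‖B‖ + 1
  have hr : 1 ≤ r := by linarith [norm_nonneg A, norm_nonneg B]
  have hball : ∀ t ∈ Metric.ball (0 : ℝ) 1, ‖A + t • B‖ ≤ r := by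
    intro t ht
    rw [mem_ball_zero_iff, Real.norm_eq_abs] at ht
    calc ‖A + t • B‖ ≤ ‖A‖ + |t| * ‖B‖ := by
          rw [← Real.norm_eq_abs, ← norm_smul]; exact norm_add_le _ _
      _ ≤ ‖A‖ + 1 * ‖B‖ := by gcongr
      _ ≤ r := by linarith
  have hline : ∀ t : ℝ, HasDerivAt (fun s : ℝ => A + s • B) B t := fun t => by
    simpa using ((hasDerivAt_id t).smul_const B).const_add A
  have h := hasDerivAt_tsum_of_isPreconnected (u := fun n => ‖B‖ * (r ^ n / n !))
    ((Real.summable_pow_div_factorial r).mul_left ‖B‖) Metric.isOpen_ball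
    (convex_ball (0 : ℝ) 1).isPreconnected
    (fun n t _ => ((hline t).fun_pow' n).const_smul ((n + 1)! : ℝ)⁻¹)
    (fun n t ht => norm_inv_factorial_succ_smul_sum_le (hball t ht) hr n)
    (Metric.mem_ball_self one_pos)
    (summable_norm_inv_factorial_succ_smul_pow (A + (0 : ℝ) • B)).of_norm
    (Metric.mem_ball_self one_pos)
  simpa using h

namespace ContinuousLinearMap

theorem mul_pow_apply (X Y : 𝔸) (n : ℕ) : (mul ℝ 𝔸 X ^ n) Y = X ^ n * Y := by
  induction n with
  | zero => simp
  | succ n ih =>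
    rw [pow_succ', mul_apply_eq_comp, ih, mul_apply', ← mul_assoc, ← pow_succ']

theorem flip_mul_pow_apply (X Y : 𝔸) (n : ℕ) : ((mul ℝ 𝔸).flip X ^ n) Y = Y * X ^ n := by
  induction n with
  | zero => simp
  | succ n ih =>
    rw [pow_succ', mul_apply_eq_comp, ih, flip_apply, mul_apply', mul_assoc, ← pow_succ]

variable [CompleteSpace 𝔸]

theorem exp_mul_apply (X Y : 𝔸) : exp (mul ℝ 𝔸 X) Y = exp X * Y := by
  have h := (expSeries_summable' (𝕂 := ℝ) (mul ℝ 𝔸 X)).hasSum.mapL (apply ℝ 𝔸 Y)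
  rw [exp_eq_tsum ℝ, exp_eq_tsum ℝ, ← (expSeries_summable' (𝕂 := ℝ) X).tsum_mul_right]
  refine h.tsum_eq.symm.trans (tsum_congr fun n => ?_)
  rw [apply_apply, smul_apply, mul_pow_apply, smul_mul_assoc]

theorem exp_flip_mul_apply (X Y : 𝔸) : exp ((mul ℝ 𝔸).flip X) Y = Y * exp X := by
  have h := (expSeries_summable' (𝕂 := ℝ) ((mul ℝ 𝔸).flip X)).hasSum.mapL (apply ℝ 𝔸 Y)
  rw [exp_eq_tsum ℝ, exp_eq_tsum ℝ, ← (expSeries_summable' (𝕂 := ℝ) X).tsum_mul_left]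
  refine h.tsum_eq.symm.trans (tsum_congr fun n => ?_)
  rw [apply_apply, smul_apply, flip_mul_pow_apply, mul_smul_comm]

end ContinuousLinearMap

open ContinuousLinearMap

def adCLM : 𝔸 →L[ℝ] 𝔸 →L[ℝ] 𝔸 := mul ℝ 𝔸 - (mul ℝ 𝔸).flip

theorem adCLM_apply (X Y : 𝔸) : adCLM X Y = ⁅X, Y⁆ := by
  simp [adCLM, Ring.lie_def]

theorem adCLM_pow_apply (X Y : 𝔸) (n : ℕ) : (adCLM X ^ n) Y = (ad ℝ 𝔸 X ^ n) Y := by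
  induction n with
  | zero => rfl
  | succ n ih =>
    rw [pow_succ', pow_succ', mul_apply_eq_comp, Module.End.mul_apply, ih, adCLM_apply, ad_apply]

theorem norm_ad_pow_apply_le (X Y : 𝔸) (n : ℕ) :
    ‖(ad ℝ 𝔸 X ^ n) Y‖ ≤ (2 * ‖X‖) ^ n * ‖Y‖ := by
  induction n with
  | zero => simp
  | succ n ih =>
    set Z := (ad ℝ 𝔸 X ^ n) Y
    rw [pow_succ', Module.End.mul_apply, ad_apply, Ring.lie_def, pow_succ', mul_assoc]
    calc ‖X * Z - Z * X‖ ≤ ‖X‖ * ‖Z‖ + ‖Z‖ * ‖X‖ :=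
          (norm_sub_le _ _).trans (add_le_add (norm_mul_le _ _) (norm_mul_le _ _))
      _ = 2 * ‖X‖ * ‖Z‖ := by ring
      _ ≤ 2 * ‖X‖ * ((2 * ‖X‖) ^ n * ‖Y‖) := by gcongr

theorem summable_norm_smul_ad_pow_apply {c : ℕ → ℝ} (hc : ∀ n, |c n| ≤ (n ! : ℝ)⁻¹)
    (X Y : 𝔸) : Summable fun n => ‖c n • (ad ℝ 𝔸 X ^ n) Y‖ := by
  refine ((Real.summable_pow_div_factorial (2 * ‖X‖)).mul_left ‖Y‖).of_nonneg_of_le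
    (fun _ => norm_nonneg _) fun n => ?_
  calc ‖c n • (ad ℝ 𝔸 X ^ n) Y‖ ≤ (n ! : ℝ)⁻¹ * ((2 * ‖X‖) ^ n * ‖Y‖) := by
        rw [norm_smul, Real.norm_eq_abs]
        exact mul_le_mul (hc n) (norm_ad_pow_apply_le X Y n) (norm_nonneg _) (by positivity)
    _ = ‖Y‖ * ((2 * ‖X‖) ^ n / n !) := by ring

variable [CompleteSpace 𝔸]

theorem exp_mul_mul_exp_neg (X Y : 𝔸) :
    exp X * Y * exp (-X) = ∑' n, (n ! : ℝ)⁻¹ • (ad ℝ 𝔸 X ^ n) Y := by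
  have hcomm : Commute (mul ℝ 𝔸 X) ((mul ℝ 𝔸).flip (-X)) := by
    ext Z
    simp [mul_assoc]
  have hsplit : adCLM X = mul ℝ 𝔸 X + (mul ℝ 𝔸).flip (-X) := by
    ext Z
    simp [adCLM, sub_eq_add_neg]
  have hexp : ∀ T : 𝔸 →L[ℝ] 𝔸, T ∈ Metric.eball 0 (expSeries ℝ (𝔸 →L[ℝ] 𝔸)).radius := by
    simp [expSeries_radius_eq_top]
  have h := (expSeries_summable' (𝕂 := ℝ) (adCLM X)).hasSum.mapL (apply ℝ 𝔸 Y)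
  calc exp X * Y * exp (-X) = exp (adCLM X) Y := by
        rw [hsplit, exp_add_of_commute_of_mem_ball hcomm (hexp _) (hexp _), mul_apply_eq_comp,
          exp_flip_mul_apply, exp_mul_apply, mul_assoc]
    _ = _ := by
        rw [exp_eq_tsum ℝ]
        refine h.tsum_eq.symm.trans (tsum_congr fun n => ?_)
        rw [apply_apply, smul_apply, adCLM_pow_apply]

theorem hasSum_dexpDerivCoeff (S N M : 𝔸) :
    HasSum (dexpDerivCoeff S N M)
      ⁅∑' n, ((n + 1)! : ℝ)⁻¹ • (ad ℝ 𝔸 S ^ n) N, exp S * M * exp (-S)⁆ := by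
  have hN := summable_norm_smul_ad_pow_apply (c := fun n => ((n + 1)! : ℝ)⁻¹)
    (fun n => by rw [abs_of_nonneg (by positivity)]; exact inv_factorial_succ_le n) S N
  have hM := summable_norm_smul_ad_pow_apply (c := fun n => (n ! : ℝ)⁻¹)
    (fun n => by rw [abs_of_nonneg (by positivity)]) S M
  rw [exp_mul_mul_exp_neg]
  convert hasSum_sum_antidiagonal_lie hN hM using 1
  funext m
  refine sum_congr rfl fun ab _ => ?_
  rw [smul_lie, lie_smul, smul_smul, mul_comm]

theorem hasSum_inv_natCast_smul_dexpDerivCoeff (S N M : 𝔸) :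
    HasSum (fun m => ((m + 2 : ℕ) : ℝ)⁻¹ • dexpDerivCoeff S N M m)
      ((∑' n, ((n + 1)! : ℝ)⁻¹ •
        ∑ i ∈ range n, adCLM S ^ (n.pred - i) * adCLM N * adCLM S ^ i) M) := by
  have hsum : Summable fun n => ((n + 1)! : ℝ)⁻¹ •
      ∑ i ∈ range n, adCLM S ^ (n.pred - i) * adCLM N * adCLM S ^ i :=
    .of_norm_bounded ((Real.summable_pow_div_factorial (‖adCLM S‖ + 1)).mul_left ‖adCLM N‖)
      fun n => norm_inv_factorial_succ_smul_sum_le (le_add_of_nonneg_right zero_le_one)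
        (le_add_of_nonneg_left (norm_nonneg _)) n
  have h := (hasSum_nat_add_iff' 1).mpr (hsum.hasSum.mapL (apply ℝ 𝔸 M))
  simp only [range_one, sum_singleton, Nat.pred_zero, range_zero, sum_empty, smul_zero, map_zero,
    sub_zero] at h
  have hterm : ∀ m : ℕ, (apply ℝ 𝔸 M) (((m + 1 + 1)! : ℝ)⁻¹ •
      ∑ i ∈ range (m + 1), adCLM S ^ ((m + 1).pred - i) * adCLM N * adCLM S ^ i) =
        ((m + 2 : ℕ) : ℝ)⁻¹ • dexpDerivCoeff S N M m := by
    intro m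
    rw [← inv_factorial_smul_sum_range_ad_pow_lie]
    simp only [apply_apply, smul_apply, _root_.sum_apply, mul_apply_eq_comp, adCLM_pow_apply,
      adCLM_apply, Nat.pred_succ]
  simp only [hterm] at h
  exact h

theorem hasDerivAt_tsum_ad_add_smul_apply (S N M : 𝔸) :
    HasDerivAt (fun t : ℝ => ∑' n, ((n + 1)! : ℝ)⁻¹ • (ad ℝ 𝔸 (S + t • N) ^ n) M)
      (∑' m, ((m + 2 : ℕ) : ℝ)⁻¹ • dexpDerivCoeff S N M m) 0 := by
  have hval : ∀ t : ℝ, ∑' n, ((n + 1)! : ℝ)⁻¹ • (ad ℝ 𝔸 (S + t • N) ^ n) M =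
      (∑' n, ((n + 1)! : ℝ)⁻¹ • (adCLM S + t • adCLM N) ^ n) M := by
    intro t
    have hsplit : adCLM S + t • adCLM N = adCLM (S + t • N) := by rw [map_add, map_smul]
    have h := ((summable_norm_inv_factorial_succ_smul_pow
      (adCLM S + t • adCLM N)).of_norm.hasSum.mapL (apply ℝ 𝔸 M))
    refine (tsum_congr fun n => ?_).trans h.tsum_eq
    rw [apply_apply, smul_apply, hsplit, adCLM_pow_apply]
  rw [funext hval, (hasSum_inv_natCast_smul_dexpDerivCoeff S N M).tsum_eq]
  exact (apply ℝ 𝔸 M).hasFDerivAt.comp_hasDerivAt 0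
    (hasDerivAt_tsum_inv_factorial_succ_smul_pow (adCLM S) (adCLM N))

end BanachAlgebra

open MeasureTheory in
theorem hasSum_intervalIntegral_smul_of_hasSum_pow_smul {E : Type*} [NormedAddCommGroup E]
    [NormedSpace ℝ E] [CompleteSpace E] {w : ℕ → E} (hw : Summable fun m => ‖w m‖) {F : ℝ → E}
    (hF : ∀ τ ∈ Set.Ioc (0 : ℝ) 1, HasSum (fun m => τ ^ m • w m) (F τ)) :
    HasSum (fun m => ((m + 2 : ℕ) : ℝ)⁻¹ • w m) (∫ τ in (0 : ℝ)..1, τ • F τ) := by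
  have hterm : ∀ m : ℕ, ∫ τ in (0 : ℝ)..1, τ ^ (m + 1) • w m = ((m + 2 : ℕ) : ℝ)⁻¹ • w m := by
    intro m
    rw [intervalIntegral.integral_smul_const, integral_pow]
    norm_num
    ring_nf
  simp_rw [← hterm]
  refine intervalIntegral.hasSum_integral_of_dominated_convergence (fun m _ => ‖w m‖)
    (fun m => ((continuous_pow (m + 1)).smul continuous_const).aestronglyMeasurable)
    (fun m => ae_of_all _ fun τ hτ => ?_) (ae_of_all _ fun _ _ => hw) intervalIntegrable_const
    (ae_of_all _ fun τ hτ => ?_)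
  · rw [Set.uIoc_of_le zero_le_one] at hτ
    rw [norm_smul, norm_pow, Real.norm_of_nonneg hτ.1.le]
    exact mul_le_of_le_one_left (norm_nonneg _) (pow_le_one₀ hτ.1.le hτ.2)
  · rw [Set.uIoc_of_le zero_le_one] at hτ
    simpa only [smul_smul, ← pow_succ'] using (hF τ hτ).const_smul τ

theorem adPow_eq_ad_pow {d : ℕ} (S M : Mat d) (n : ℕ) :
    adPow S n M = (ad ℝ (Mat d) S ^ n) M := by
  induction n with
  | zero => rfl
  | succ n ih => rw [adPow, ih, pow_succ', Module.End.mul_apply, ad_apply, Ring.lie_def]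

theorem dexp_eq_tsum {d : ℕ} (S M : Mat d) :
    dexp S M = ∑' n, ((n + 1)! : ℝ)⁻¹ • (ad ℝ (Mat d) S ^ n) M :=
  tsum_congr fun n => by rw [adPow_eq_ad_pow, inv_natCast_smul_eq ℂ ℝ]

theorem lieComm_eq_lie {d : ℕ} (A B : Mat d) : lieComm A B = ⁅A, B⁆ := rfl

theorem stmt4_general (d : ℕ) (S M N : Mat d) :
    HasDerivAt (fun t : ℝ => dexp (S + t • N) M)
      (∫ τ in (0:ℝ)..1,
        τ • lieComm (dexp (τ • S) N)
          (NormedSpace.exp (τ • S) * M * NormedSpace.exp (-(τ • S)))) 0 := by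
  -- The entrywise sup norm is not submultiplicative; the Banach-algebra lemmas are applied with
  -- the `L∞` operator norm, which induces the same topology.
  have hcoeff : ∀ τ : ℝ, HasSum (fun m => τ ^ m • dexpDerivCoeff S N M m)
      (lieComm (dexp (τ • S) N) (exp (τ • S) * M * exp (-(τ • S)))) := by
    intro τ
    simp only [← dexpDerivCoeff_smul, dexp_eq_tsum, lieComm_eq_lie]
    open scoped Matrix.Norms.Operator in exact hasSum_dexpDerivCoeff (τ • S) N M
  have hsummable : Summable fun m => ‖dexpDerivCoeff S N M m‖ := by
    have h := (hcoeff 1).summable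
    simp only [one_pow, one_smul] at h
    exact summable_norm_iff.mpr h
  rw [← (hasSum_intervalIntegral_smul_of_hasSum_pow_smul hsummable fun τ _ => hcoeff τ).tsum_eq]
  simp only [dexp_eq_tsum]
  open scoped Matrix.Norms.Operator in exact hasDerivAt_tsum_ad_add_smul_apply S N M

/-- The function `t ↦ dexp_{Σ+tN}(M)` is differentiable at `t = 0` with
derivative `∫_0^1 τ [dexp_{τΣ}(N), e^{τΣ} M e^{−τΣ}] dτ`. -/
theorem stmt4 (d : ℕ) (hd : 1 ≤ d) (S M N : Mat d) :
    HasDerivAt (fun t : ℝ => dexp (S + t • N) M)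
      (∫ τ in (0:ℝ)..1,
        τ • lieComm (dexp (τ • S) N)
          (NormedSpace.exp (τ • S) * M * NormedSpace.exp (-(τ • S)))) 0 :=
  stmt4_general d S M N
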